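/- Let ν < κ be regular uncountable cardinals with cf(ν, γ) < κ for all ν < γ < κ, and let μ = κ⁺. For each γ < μ fix a club T_γ ⊆ P_κ γ of size κ, and for each z ∈ ⋃_{γ<μ} T_γ fix a cofinal set C_z ⊆ P_ν z of size < κ; enumerate ⋃{C_z} as {c_ξ : ξ < μ}. Then the set T = {z ∈ ⋃_{γ<μ} T_γ : {c_ξ : ξ ∈ z} is cofinal in P_ν z} is stationary in P_κ μ. -/

import Mathlib

/-!
Given a club `D ⊆ P_κ μ`, Menas' theorem yields `f : [μ]^{<ω} → P_κ μ` whose closure points all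
lie in `D`. The supremum `γbar < μ = κ⁺` of a `κ`-sequence of ordinals, closed under `f` and under
choosing indices `ξ` of the members of the `C_z` for `z ∈ T_γ`, is closed under `f`, and every
member of `P_ν γbar` is covered by some `c_ξ` with `ξ < γbar`. Then build a `ν`-chain in the club
`T_γbar`, adding at each stage the values of `f` and the indices of a cofinal family of size
`< κ` in `P_ν` of the previous stage (such a family exists because `cf(ν, γ) < κ`). Its union `z`
lies in `T_γbar`, is closed under `f` (hence lies in `D`), and the `c_ξ` with `ξ ∈ z` are cofinal
in `P_ν z`.
-/

set_option autoImplicit false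

open Cardinal Set

/-- `x` has cardinality `< c`. -/
def cardLT (x : Set Ordinal.{0}) (c : Cardinal.{0}) : Prop :=
  Cardinal.mk ↥x < Cardinal.lift.{1, 0} c

/-- `x` has cardinality `≤ c`. -/
def cardLE (x : Set Ordinal.{0}) (c : Cardinal.{0}) : Prop :=
  Cardinal.mk ↥x ≤ Cardinal.lift.{1, 0} c

/-- `x` has cardinality `= c`. -/
def cardEQ (x : Set Ordinal.{0}) (c : Cardinal.{0}) : Prop :=
  Cardinal.mk ↥x = Cardinal.lift.{1, 0} c

/-- `P_κ Λ`: subsets of `{β | β < Λ}` of size `< κ`. -/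
def pkl (κ : Cardinal.{0}) (Λ : Ordinal.{0}) : Set (Set Ordinal.{0}) :=
  {x | x ⊆ Set.Iio Λ ∧ cardLT x κ}

/-- `C` is club in the ground family `X`: cofinal in `(X, ⊆)` and closed under
unions of `⊆`-increasing chains of length `< κ`. -/
def IsClubP (κ : Cardinal.{0}) (X C : Set (Set Ordinal.{0})) : Prop :=
  C ⊆ X ∧ (∀ x ∈ X, ∃ c ∈ C, x ⊆ c) ∧
  ∀ (δ : Ordinal.{0}) (f : Ordinal.{0} → Set Ordinal.{0}),
    δ ≠ 0 → δ < κ.ord →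
    (∀ i j, i ≤ j → j < δ → f i ⊆ f j) →
    (∀ i < δ, f i ∈ C) →
    (⋃ i ∈ Set.Iio δ, f i) ∈ C

/-- `S` is stationary in the ground family `X`: `S ⊆ X` and `S` meets every club. -/
def IsStatP (κ : Cardinal.{0}) (X S : Set (Set Ordinal.{0})) : Prop :=
  S ⊆ X ∧ ∀ C, IsClubP κ X C → (S ∩ C).Nonempty

/-- `C` is closed unbounded in the ordinal `κ`. -/
def IsClubIn (C : Set Ordinal.{0}) (κ : Ordinal.{0}) : Prop :=
  C ⊆ Set.Iio κ ∧ (∀ α < κ, ∃ β ∈ C, α ≤ β) ∧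
  ∀ δ, δ ≠ 0 → δ < κ → (∀ α < δ, ∃ β ∈ C, α < β ∧ β < δ) → δ ∈ C

/-- `S` is stationary in the ordinal `κ`. -/
def IsStatIn (S : Set Ordinal.{0}) (κ : Ordinal.{0}) : Prop :=
  S ⊆ Set.Iio κ ∧ ∀ C, IsClubIn C κ → (S ∩ C).Nonempty

/-- `C(f)`: the members of `P_κ Λ` closed under `f`. -/
def clubC (κ : Cardinal.{0}) (Λ : Ordinal.{0}) (f : Finset Ordinal.{0} → Set Ordinal.{0}) :
    Set (Set Ordinal.{0}) :=
  {x | x ∈ pkl κ Λ ∧ ∀ a : Finset Ordinal.{0}, ↑a ⊆ x → f a ⊆ x}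

section CardLT

variable {κ : Cardinal.{0}}

lemma cardLT_of_finite (hκ : ℵ₀ ≤ κ) {x : Set Ordinal.{0}} (hx : x.Finite) : cardLT x κ :=
  (lt_aleph0_iff_set_finite.2 hx).trans_le (by simpa using hκ)

lemma cardLT_union (hκ : ℵ₀ ≤ κ) {x y : Set Ordinal.{0}} (hx : cardLT x κ) (hy : cardLT y κ) :
    cardLT (x ∪ y) κ :=
  (mk_union_le x y).trans_lt (add_lt_of_lt (by simpa using hκ) hx hy)

lemma cardLT_insert (hκ : ℵ₀ ≤ κ) (o : Ordinal.{0}) {x : Set Ordinal.{0}}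
    (hx : cardLT x κ) : cardLT (insert o x) κ := by
  rw [insert_eq]
  exact cardLT_union hκ (cardLT_of_finite hκ (finite_singleton o)) hx

lemma cardLT_iUnion (hκ : κ.IsRegular) {ι : Type 1} {x : ι → Set Ordinal.{0}}
    (hι : #ι < lift.{1} κ) (hx : ∀ i, cardLT (x i) κ) : cardLT (⋃ i, x i) κ :=
  (card_iUnion_lt_iff_forall_of_isRegular hκ.lift hι).2 hx

lemma cardLT_image (f : Ordinal.{0} → Ordinal.{0}) {x : Set Ordinal.{0}} (hx : cardLT x κ) :
    cardLT (f '' x) κ :=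
  mk_image_le.trans_lt hx

lemma mk_Iio_lt_lift {o : Ordinal.{0}} (ho : o < κ.ord) : #(Iio o) < lift.{1} κ := by
  rw [mk_Iio_ordinal, lift_lt]
  exact lt_ord.1 ho

lemma mk_finset_subset_le (W : Set Ordinal.{0}) :
    #{a : Finset Ordinal.{0} // ↑a ⊆ W} ≤ max #W ℵ₀ := by
  rw [show #{a : Finset Ordinal.{0} // ↑a ⊆ W} = #(Finset W) from
    (mk_congr (Equiv.finsetSubtypeComm (· ∈ W))).symm]
  rcases W.finite_or_infinite with hW | hW
  · have := hW.to_subtype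
    exact (lt_aleph0_of_finite _).le.trans (le_max_right _ _)
  · have := hW.to_subtype
    exact (mk_finset_of_infinite W).le.trans (le_max_left _ _)

end CardLT

lemma sSup_add_one_lt_of_cardLT {δ : Ordinal.{0}} {S : Set Ordinal.{0}} (hS : S ⊆ Iio δ)
    (hSc : cardLT S δ.cof) : sSup ((· + 1) '' S) < δ := by
  refine Ordinal.sSup_add_one_lt_of_lt_cof ?_ hS
  rw [← Ordinal.lift_cof]
  exact hSc

lemma lt_sSup_add_one {δ : Ordinal.{0}} {S : Set Ordinal.{0}} (hS : S ⊆ Iio δ) {o : Ordinal.{0}}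
    (ho : o ∈ S) : o < sSup ((· + 1) '' S) := by
  have hbdd : BddAbove ((· + 1) '' S) := ⟨δ, by
    rintro _ ⟨i, hi, rfl⟩
    exact Order.add_one_le_of_lt (hS hi)⟩
  exact (lt_add_one o).trans_le (le_csSup hbdd ⟨o, ho, rfl⟩)

lemma exists_subset_of_subset_iUnion {δ : Ordinal.{0}} {w : Ordinal.{0} → Set Ordinal.{0}}
    (hw : ∀ i j, i ≤ j → j < δ → w i ⊆ w j) {x : Set Ordinal.{0}}
    (hx : x ⊆ ⋃ i ∈ Iio δ, w i) (hxδ : cardLT x δ.cof) : ∃ b < δ, x ⊆ w b := by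
  have hidx : ∀ o : x, ∃ i < δ, o.1 ∈ w i := fun o => by simpa using hx o.2
  choose idx hidxδ hidxw using hidx
  have hS : range idx ⊆ Iio δ := by
    rintro _ ⟨o, rfl⟩
    exact hidxδ o
  have hbδ := sSup_add_one_lt_of_cardLT hS (mk_range_le.trans_lt hxδ)
  exact ⟨_, hbδ, fun o ho =>
    hw _ _ (lt_sSup_add_one hS ⟨⟨o, ho⟩, rfl⟩).le hbδ (hidxw ⟨o, ho⟩)⟩

noncomputable def closureSeq (A : Ordinal.{0} → Set Ordinal.{0}) (j : Ordinal.{0}) : Ordinal.{0} :=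
  sSup ((· + 1) '' ⋃ p : Iio j, insert (closureSeq A p) (A (closureSeq A p)))
termination_by j
decreasing_by exact p.2

section ClosureOrdinal

variable {θ ρ : Cardinal.{0}} {A : Ordinal.{0} → Set Ordinal.{0}}

lemma closureSeq_spec (hρ : ρ.IsRegular) (hθρ : θ < ρ)
    (hA : ∀ γ < ρ.ord, A γ ⊆ Iio ρ.ord ∧ cardLT (A γ) ρ) :
    ∀ j < θ.ord, closureSeq A j < ρ.ord ∧
      ∀ p < j, closureSeq A p < closureSeq A j ∧ A (closureSeq A p) ⊆ Iio (closureSeq A j) := by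
  intro j
  induction j using WellFoundedLT.induction with
  | ind j IH =>
  intro hj
  set B := ⋃ p : Iio j, insert (closureSeq A p) (A (closureSeq A p))
  have hprev : ∀ p < j, closureSeq A p < ρ.ord := fun p hp => (IH p hp (hp.trans hj)).1
  have hB : B ⊆ Iio ρ.ord := iUnion_subset fun p =>
    insert_subset (hprev p p.2) (hA _ (hprev p p.2)).1
  have hBc : cardLT B ρ :=
    cardLT_iUnion hρ (mk_Iio_lt_lift (hj.trans (ord_lt_ord.2 hθρ)))
      fun p => cardLT_insert hρ.aleph0_le _ (hA _ (hprev p p.2)).2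
  have hlt : ∀ o ∈ B, o < closureSeq A j := fun o ho => by
    rw [closureSeq]
    exact lt_sSup_add_one hB ho
  refine ⟨?_, fun p hp => ⟨hlt _ ?_, fun o ho => hlt o ?_⟩⟩
  · rw [closureSeq]
    exact sSup_add_one_lt_of_cardLT hB (by rwa [hρ.cof_ord])
  · exact mem_iUnion.2 ⟨⟨p, hp⟩, mem_insert _ _⟩
  · exact mem_iUnion.2 ⟨⟨p, hp⟩, mem_insert_of_mem _ ho⟩

lemma exists_closed_ord (hθ : θ.IsRegular) (hρ : ρ.IsRegular) (hθρ : θ < ρ)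
    (hA : ∀ γ < ρ.ord, A γ ⊆ Iio ρ.ord ∧ cardLT (A γ) ρ) :
    ∃ γbar < ρ.ord, ∀ x ⊆ Iio γbar, cardLT x θ →
      ∃ γ ≤ γbar, x ⊆ Iio γ ∧ A γ ⊆ Iio γbar := by
  have hspec := closureSeq_spec hρ hθρ hA
  set s := closureSeq A
  have hθρo : θ.ord < ρ.ord := ord_lt_ord.2 hθρ
  have hle : ∀ j < θ.ord, s j ≤ sSup (s '' Iio θ.ord) := fun j hj =>
    le_csSup Ordinal.bddAbove_of_small ⟨j, hj, rfl⟩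
  refine ⟨sSup (s '' Iio θ.ord), ?_, fun x hx hxθ => ?_⟩
  · refine Ordinal.sSup_lt_of_lt_cof ?_ ?_
    · rw [← Ordinal.lift_cof, hρ.cof_ord]
      exact mk_image_le.trans_lt (mk_Iio_lt_lift hθρo)
    · rintro _ ⟨j, hj, rfl⟩
      exact (hspec j hj).1
  have hxs : x ⊆ ⋃ j ∈ Iio θ.ord, Iio (s j) := fun o ho => by
    obtain ⟨_, ⟨j, hj, rfl⟩, hoj⟩ := exists_lt_of_lt_csSup' (mem_Iio.1 (hx ho))
    exact mem_biUnion hj hoj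
  have hmono : ∀ i j, i ≤ j → j < θ.ord → Iio (s i) ⊆ Iio (s j) := fun i j hij hj => by
    rcases hij.eq_or_lt with rfl | hij
    · exact subset_rfl
    · exact Iio_subset_Iio ((hspec j hj).2 i hij).1.le
  obtain ⟨v, hv, hxv⟩ := exists_subset_of_subset_iUnion hmono hxs (by rwa [hθ.cof_ord])
  have hv1 : v + 1 < θ.ord := (isSuccLimit_ord hθ.aleph0_le).add_one_lt hv
  refine ⟨s v, hle v hv, hxv, ?_⟩
  exact ((hspec _ hv1).2 v (lt_add_one v)).2.trans (Iio_subset_Iio (hle _ hv1))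

end ClosureOrdinal

section Pkl

variable {κ : Cardinal.{0}} {Γ : Ordinal.{0}}

lemma pkl_mono {Λ Λ' : Ordinal.{0}} (h : Λ ≤ Λ') : pkl κ Λ ⊆ pkl κ Λ' :=
  fun _ hx => ⟨hx.1.trans (Iio_subset_Iio h), hx.2⟩

lemma union_mem_pkl (hκ : ℵ₀ ≤ κ) {x y : Set Ordinal.{0}} (hx : x ∈ pkl κ Γ)
    (hy : y ∈ pkl κ Γ) : x ∪ y ∈ pkl κ Γ :=
  ⟨union_subset hx.1 hy.1, cardLT_union hκ hx.2 hy.2⟩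

lemma iUnion_mem_pkl (hκ : κ.IsRegular) {ι : Type 1} {x : ι → Set Ordinal.{0}}
    (hι : #ι < lift.{1} κ) (hx : ∀ i, x i ∈ pkl κ Γ) : ⋃ i, x i ∈ pkl κ Γ :=
  ⟨iUnion_subset fun i => (hx i).1, cardLT_iUnion hκ hι fun i => (hx i).2⟩

lemma IsClubP.exists_cover {C : Set (Set Ordinal.{0})} (hC : IsClubP κ (pkl κ Γ) C) :
    ∃ cov : Set Ordinal.{0} → Set Ordinal.{0}, ∀ x ∈ pkl κ Γ, cov x ∈ C ∧ x ⊆ cov x := by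
  have hcov : ∀ x, ∃ c, x ∈ pkl κ Γ → c ∈ C ∧ x ⊆ c := fun x => by
    by_cases hx : x ∈ pkl κ Γ
    · obtain ⟨c, hc, hxc⟩ := hC.2.1 x hx
      exact ⟨c, fun _ => ⟨hc, hxc⟩⟩
    · exact ⟨∅, fun h => absurd h hx⟩
  choose cov hcov using hcov
  exact ⟨cov, hcov⟩

noncomputable def stepChain (cov step : Set Ordinal.{0} → Set Ordinal.{0}) (i : Ordinal.{0}) :
    Set Ordinal.{0} :=
  cov (⋃ p : Iio i, (stepChain cov step p ∪ step (stepChain cov step p)))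
termination_by i
decreasing_by exact p.2

lemma stepChain_spec {ν : Cardinal.{0}} (hκ : κ.IsRegular) (hνκ : ν < κ)
    {C : Set (Set Ordinal.{0})} (hC : C ⊆ pkl κ Γ) {cov step : Set Ordinal.{0} → Set Ordinal.{0}}
    (hcov : ∀ x ∈ pkl κ Γ, cov x ∈ C ∧ x ⊆ cov x) (hstep : ∀ W ∈ pkl κ Γ, step W ∈ pkl κ Γ) :
    ∀ i < ν.ord, stepChain cov step i ∈ C ∧
      ∀ p < i, stepChain cov step p ∪ step (stepChain cov step p) ⊆ stepChain cov step i := by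
  intro i
  induction i using WellFoundedLT.induction with
  | ind i IH =>
  intro hi
  have hprev : ∀ p < i, stepChain cov step p ∈ pkl κ Γ := fun p hp =>
    hC (IH p hp (hp.trans hi)).1
  have hX : ⋃ p : Iio i, (stepChain cov step p ∪ step (stepChain cov step p)) ∈ pkl κ Γ :=
    iUnion_mem_pkl hκ (mk_Iio_lt_lift (hi.trans (ord_lt_ord.2 hνκ))) fun p =>
      union_mem_pkl hκ.aleph0_le (hprev p p.2) (hstep _ (hprev p p.2))
  rw [stepChain]
  exact ⟨(hcov _ hX).1, fun p hp => (subset_iUnion_of_subset ⟨p, hp⟩ subset_rfl).trans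
    (hcov _ hX).2⟩

lemma IsClubP.exists_mem_forall_subset_step {ν : Cardinal.{0}} (hν : ν.IsRegular)
    (hκ : κ.IsRegular) (hνκ : ν < κ) {C : Set (Set Ordinal.{0})} (hC : IsClubP κ (pkl κ Γ) C)
    (step : Set Ordinal.{0} → Set Ordinal.{0}) (hstep : ∀ W ∈ pkl κ Γ, step W ∈ pkl κ Γ) :
    ∃ z ∈ C, ∀ x ⊆ z, cardLT x ν → ∃ w ∈ pkl κ Γ, x ⊆ w ∧ step w ⊆ z := by
  obtain ⟨cov, hcov⟩ := hC.exists_cover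
  have hw := stepChain_spec hκ hνκ hC.1 hcov hstep
  set w := stepChain cov step
  have hmono : ∀ i j, i ≤ j → j < ν.ord → w i ⊆ w j := fun i j hij hj => by
    rcases hij.eq_or_lt with rfl | hij
    · exact subset_rfl
    · exact subset_union_left.trans ((hw j hj).2 i hij)
  have hzw : ∀ i < ν.ord, w i ⊆ ⋃ i ∈ Iio ν.ord, w i := fun i hi =>
    subset_biUnion_of_mem (u := w) hi
  refine ⟨⋃ i ∈ Iio ν.ord, w i, hC.2.2 _ w hν.ord_pos.ne' (ord_lt_ord.2 hνκ) hmono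
    fun i hi => (hw i hi).1, fun x hx hxν => ?_⟩
  obtain ⟨b, hb, hxb⟩ := exists_subset_of_subset_iUnion hmono hx (by rwa [hν.cof_ord])
  have hb1 : b + 1 < ν.ord := (isSuccLimit_ord hν.aleph0_le).add_one_lt hb
  exact ⟨w b, hC.1 (hw b hb).1, hxb,
    subset_union_right.trans (((hw _ hb1).2 b (lt_add_one b)).trans (hzw _ hb1))⟩

end Pkl

def finsetUnion (f : Finset Ordinal.{0} → Set Ordinal.{0}) (x : Set Ordinal.{0}) :
    Set Ordinal.{0} :=
  ⋃ a : {a : Finset Ordinal.{0} // ↑a ⊆ x}, f a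

section FinsetUnion

variable {f : Finset Ordinal.{0} → Set Ordinal.{0}} {x y : Set Ordinal.{0}}

lemma subset_finsetUnion {a : Finset Ordinal.{0}} (ha : ↑a ⊆ x) : f a ⊆ finsetUnion f x :=
  subset_iUnion_of_subset ⟨a, ha⟩ subset_rfl

lemma finsetUnion_subset_iff : finsetUnion f x ⊆ y ↔ ∀ a : Finset Ordinal.{0}, ↑a ⊆ x → f a ⊆ y :=
  ⟨fun h _ ha => (subset_finsetUnion ha).trans h, fun h => iUnion_subset fun a => h a a.2⟩

lemma finsetUnion_mono (hxy : x ⊆ y) : finsetUnion f x ⊆ finsetUnion f y :=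
  finsetUnion_subset_iff.2 fun _ ha => subset_finsetUnion (ha.trans hxy)

lemma cardLT_finsetUnion {κ : Cardinal.{0}} (hκ : κ.IsRegular) (hκu : ℵ₀ < κ)
    (hx : cardLT x κ) (hf : ∀ a : Finset Ordinal.{0}, ↑a ⊆ x → cardLT (f a) κ) :
    cardLT (finsetUnion f x) κ :=
  cardLT_iUnion hκ ((mk_finset_subset_le x).trans_lt (max_lt hx (by simpa using hκu)))
    fun a => hf a a.2

lemma finsetUnion_eq_of_finite (hf : Monotone f) (hx : x.Finite) :
    finsetUnion f x = f hx.toFinset :=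
  (finsetUnion_subset_iff.2 fun _ ha => hf (by simpa using ha)).antisymm
    (subset_finsetUnion (by simp))

end FinsetUnion

section Menas

variable {κ : Cardinal.{0}} {Λ : Ordinal.{0}} {D : Set (Set Ordinal.{0})}

-- By induction on `#x`: an infinite `x` of size `θ` is the union of a `θ.ord`-chain of smaller
-- sets.
lemma IsClubP.finsetUnion_mem (hD : IsClubP κ (pkl κ Λ) D)
    {f : Finset Ordinal.{0} → Set Ordinal.{0}} (hf : Monotone f) (hfD : ∀ a, f a ∈ D)
    {x : Set Ordinal.{0}} (hx : cardLT x κ) : finsetUnion f x ∈ D := by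
  obtain ⟨θ, hθ, hxθ⟩ := lt_lift_iff.1 hx
  clear hx
  induction θ using WellFoundedLT.induction generalizing x with
  | ind θ IH =>
  rcases lt_or_ge θ ℵ₀ with hfin | hinf
  · have hxfin : x.Finite := lt_aleph0_iff_set_finite.1 (by simpa [← hxθ] using hfin)
    rw [finsetUnion_eq_of_finite hf hxfin]
    exact hfD _
  obtain ⟨e⟩ : Nonempty (Iio θ.ord ≃ x) := Cardinal.eq.1 (by rw [mk_Iio_ordinal, card_ord, hxθ])
  set y : Ordinal.{0} → Set Ordinal.{0} := fun α => (fun i => (e i).1) '' {i | i.1 < α}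
  have hyx : ∀ α, y α ⊆ x := by
    rintro α _ ⟨i, -, rfl⟩
    exact (e i).2
  have hymono : ∀ α β, α ≤ β → y α ⊆ y β := fun α β hαβ =>
    image_mono fun i (hi : i.1 < α) => hi.trans_le hαβ
  have hyD : ∀ α < θ.ord, finsetUnion f (y α) ∈ D := by
    intro α hα
    have hyα : #(y α) < lift.{1} θ := calc
      #(y α) ≤ #{i : Iio θ.ord | i.1 < α} := mk_image_le
      _ = #(Subtype.val '' {i : Iio θ.ord | i.1 < α}) := (mk_image_eq Subtype.val_injective).symm
      _ ≤ #(Iio α) := mk_le_mk_of_subset (by rintro _ ⟨i, hi, rfl⟩; exact hi)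
      _ < lift.{1} θ := mk_Iio_lt_lift hα
    obtain ⟨θ', hθ'θ, hyθ'⟩ := lt_lift_iff.1 hyα
    exact IH θ' hθ'θ (hθ'θ.trans hθ) hyθ'
  have hlim := isSuccLimit_ord hinf
  have hx_iUnion : x ⊆ ⋃ α ∈ Iio θ.ord, y α := fun o ho => by
    set i := e.symm ⟨o, ho⟩
    exact mem_biUnion (hlim.add_one_lt i.2) ⟨i, lt_add_one i.1, by simp [i]⟩
  have hunion : finsetUnion f x = ⋃ α ∈ Iio θ.ord, finsetUnion f (y α) := by
    refine (finsetUnion_subset_iff.2 fun a ha => ?_).antisymm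
      (iUnion₂_subset fun α _ => finsetUnion_mono (hyx α))
    have hcof : ℵ₀ ≤ θ.ord.cof := Ordinal.aleph0_le_cof_iff.2 (Ordinal.one_lt_cof_iff.2 hlim)
    obtain ⟨b, hb, hab⟩ := exists_subset_of_subset_iUnion (fun α β hαβ _ => hymono α β hαβ)
      (ha.trans hx_iUnion) (cardLT_of_finite hcof a.finite_toSet)
    exact (subset_finsetUnion hab).trans
      (subset_biUnion_of_mem (u := fun α => finsetUnion f (y α)) hb)
  rw [hunion]
  exact hD.2.2 _ _ hlim.ne_bot (ord_lt_ord.2 hθ)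
    (fun α β hαβ _ => finsetUnion_mono (hymono α β hαβ)) hyD

noncomputable def finsetHull (cov : Set Ordinal.{0} → Set Ordinal.{0}) (a : Finset Ordinal.{0}) :
    Set Ordinal.{0} :=
  cov (↑a ∪ ⋃ b : a.ssubsets, finsetHull cov b)
termination_by a.card
decreasing_by exact Finset.card_lt_card (Finset.mem_ssubsets.1 b.2)

lemma finsetHull_spec (hκ : κ.IsRegular) (hD : D ⊆ pkl κ Λ)
    {cov : Set Ordinal.{0} → Set Ordinal.{0}}
    (hcov : ∀ x, cardLT x κ → cov x ∈ D ∧ x ∩ Iio Λ ⊆ cov x) (a : Finset Ordinal.{0}) :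
    finsetHull cov a ∈ D ∧ ↑a ∩ Iio Λ ⊆ finsetHull cov a ∧
      ∀ b ⊂ a, finsetHull cov b ⊆ finsetHull cov a := by
  induction a using Finset.strongInduction with
  | H a IH =>
  set X := ↑a ∪ ⋃ b : a.ssubsets, finsetHull cov b
  have hX : cardLT X κ :=
    cardLT_union hκ.aleph0_le (cardLT_of_finite hκ.aleph0_le a.finite_toSet)
      (cardLT_iUnion hκ ((lt_aleph0_of_finite _).trans_le (by simpa using hκ.aleph0_le))
        fun b => (hD (IH b (Finset.mem_ssubsets.1 b.2)).1).2)
  rw [finsetHull]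
  refine ⟨(hcov X hX).1, (inter_subset_inter_left _ subset_union_left).trans (hcov X hX).2,
    fun b hb => ?_⟩
  have hbX : finsetHull cov b ⊆ X := fun o ho =>
    Or.inr (mem_iUnion.2 ⟨⟨b, Finset.mem_ssubsets.2 hb⟩, ho⟩)
  exact (subset_inter hbX (hD (IH b hb).1).1).trans (hcov X hX).2

-- Menas' theorem.
lemma IsClubP.exists_clubC_subset (hκ : κ.IsRegular) (hD : IsClubP κ (pkl κ Λ) D) :
    ∃ f : Finset Ordinal.{0} → Set Ordinal.{0}, (∀ a, f a ∈ pkl κ Λ) ∧ clubC κ Λ f ⊆ D := by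
  obtain ⟨cov, hcov⟩ := hD.exists_cover
  have hcov' : ∀ x, cardLT x κ → cov (x ∩ Iio Λ) ∈ D ∧ x ∩ Iio Λ ⊆ cov (x ∩ Iio Λ) :=
    fun x hx => hcov _ ⟨inter_subset_right, (mk_le_mk_of_subset inter_subset_left).trans_lt hx⟩
  have hf := finsetHull_spec hκ hD.1 hcov'
  set f := finsetHull fun x => cov (x ∩ Iio Λ)
  have hfmono : Monotone f := fun b a hba => by
    rcases eq_or_ssubset_of_subset hba with rfl | hba
    · exact subset_rfl
    · exact (hf a).2.2 b hba
  refine ⟨f, fun a => hD.1 (hf a).1, fun x hx => ?_⟩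
  have hxf : x = finsetUnion f x := by
    refine subset_antisymm (fun o ho => ?_) (finsetUnion_subset_iff.2 hx.2)
    refine subset_finsetUnion (a := {o}) (by simpa using ho) ((hf {o}).2.1 ?_)
    simpa using hx.1.1 ho
  rw [hxf]
  exact hD.finsetUnion_mem hfmono (fun a => (hf a).1) hx.1.2

end Menas

def CofinalIn (ν : Cardinal.{0}) (W : Set Ordinal.{0}) (Y : Set (Set Ordinal.{0})) : Prop :=
  (∀ y ∈ Y, y ⊆ W ∧ cardLT y ν) ∧ ∀ x ⊆ W, cardLT x ν → ∃ y ∈ Y, x ⊆ y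

lemma exists_injOn_mapsTo {W V : Set Ordinal.{0}} (h : #W ≤ #V) :
    ∃ g : Ordinal.{0} → Ordinal.{0}, InjOn g W ∧ MapsTo g W V := by
  classical
  obtain ⟨e⟩ := (le_def _ _).1 h
  refine ⟨fun o => if ho : o ∈ W then e ⟨o, ho⟩ else 0, fun o ho o' ho' hoo' => ?_,
    fun o ho => by simp [ho]⟩
  have := e.injective (Subtype.val_injective (by simpa [ho, ho'] using hoo'))
  exact congrArg Subtype.val this

lemma CofinalIn.preimage {ν : Cardinal.{0}} {W V : Set Ordinal.{0}} {Y : Set (Set Ordinal.{0})}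
    (hY : CofinalIn ν V Y) {g : Ordinal.{0} → Ordinal.{0}} (hg : InjOn g W) (hgW : MapsTo g W V) :
    CofinalIn ν W ((fun y => W ∩ g ⁻¹' y) '' Y) := by
  refine ⟨?_, fun x hxW hxν => ?_⟩
  · rintro _ ⟨y, hy, rfl⟩
    refine ⟨inter_subset_left, ?_⟩
    rw [cardLT, ← mk_image_eq_of_injOn _ _ (hg.mono inter_subset_left)]
    exact (mk_le_mk_of_subset ((image_mono inter_subset_right).trans
      (image_preimage_subset g y))).trans_lt (hY.1 y hy).2
  · obtain ⟨y, hy, hxy⟩ := hY.2 (g '' x) (image_subset_iff.2 fun o ho => hgW (hxW ho))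
      (cardLT_image g hxν)
    exact ⟨_, ⟨y, hy, rfl⟩, subset_inter hxW (image_subset_iff.1 hxy)⟩

lemma exists_cofinalIn_of_cardLT {ν κ : Cardinal.{0}} (hκ : κ.IsRegular) (hνκ : ν < κ)
    (hcf : ∀ γ : Ordinal.{0}, ν.ord < γ → γ < κ.ord →
      ∃ Y : Set (Set Ordinal.{0}), #Y < lift.{1} κ ∧ CofinalIn ν (Iio γ) Y)
    {W : Set Ordinal.{0}} (hW : cardLT W κ) :
    ∃ Y : Set (Set Ordinal.{0}), #Y < lift.{1} κ ∧ CofinalIn ν W Y := by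
  obtain ⟨θ, hθκ, hWθ⟩ := lt_lift_iff.1 hW
  -- `γ` lies strictly between `ν` and `κ`, as `hcf` requires, and `W` embeds into it.
  set γ := max (ν.ord + 1) θ.ord
  have hγκ : γ < κ.ord := max_lt ((isSuccLimit_ord hκ.aleph0_le).add_one_lt (ord_lt_ord.2 hνκ))
    (ord_lt_ord.2 hθκ)
  have hWγ : #W ≤ #(Iio γ) := by
    rw [← hWθ, ← card_ord θ, ← mk_Iio_ordinal]
    exact mk_le_mk_of_subset (Iio_subset_Iio (le_max_right _ _))
  obtain ⟨g, hg, hgW⟩ := exists_injOn_mapsTo hWγ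
  obtain ⟨Y, hYκ, hY⟩ := hcf γ ((lt_add_one _).trans_le (le_max_left _ _)) hγκ
  exact ⟨_, mk_image_le.trans_lt hYκ, hY.preimage hg hgW⟩

def CofinalBy (ν : Cardinal.{0}) (c : Ordinal.{0} → Set Ordinal.{0}) (z : Set Ordinal.{0}) :
    Prop :=
  ∀ y ⊆ z, cardLT y ν → ∃ ξ ∈ z, y ⊆ c ξ

section Stationarity

variable {ν κ : Cardinal.{0}}

lemma exists_ord_closed_cofinalBy (hκ : κ.IsRegular) (hνκ : ν < κ)
    {T : Ordinal.{0} → Set (Set Ordinal.{0})}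
    (hT : ∀ γ < (Order.succ κ).ord,
      IsClubP κ (pkl κ γ) (T γ) ∧ #(T γ) ≤ lift.{1} κ)
    {C : Set Ordinal.{0} → Set (Set Ordinal.{0})}
    (hC : ∀ γ < (Order.succ κ).ord, ∀ z ∈ T γ,
      CofinalIn ν z (C z) ∧ #(C z) < lift.{1} κ)
    {c : Ordinal.{0} → Set Ordinal.{0}}
    (hc : ⋃ γ ∈ Iio (Order.succ κ).ord, ⋃ z ∈ T γ, C z ⊆ c '' Iio (Order.succ κ).ord)
    {f : Finset Ordinal.{0} → Set Ordinal.{0}} (hf : ∀ a, f a ∈ pkl κ (Order.succ κ).ord) :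
    ∃ γbar < (Order.succ κ).ord, (∀ a : Finset Ordinal.{0}, ↑a ⊆ Iio γbar → f a ⊆ Iio γbar) ∧
      CofinalBy ν c (Iio γbar) := by
  set μ := (Order.succ κ).ord
  have hμ : (Order.succ κ).IsRegular := isRegular_succ hκ.aleph0_le
  have hκμ : lift.{1} κ < lift.{1} (Order.succ κ) := lift_lt.2 (Order.lt_succ κ)
  set idx := Function.invFunOn c (Iio μ)
  set A : Ordinal.{0} → Set Ordinal.{0} := fun γ =>
    finsetUnion f (Iio γ) ∪ idx '' ⋃ z ∈ T γ, C z
  have hidx : ∀ γ < μ, ∀ z ∈ T γ, ∀ w ∈ C z, idx w < μ ∧ c (idx w) = w := fun γ hγ z hz w hw =>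
    have hw' := hc (mem_biUnion hγ (mem_biUnion hz hw))
    ⟨Function.invFunOn_mem hw', Function.invFunOn_eq hw'⟩
  have hA : ∀ γ < μ, A γ ⊆ Iio μ ∧ cardLT (A γ) (Order.succ κ) := by
    intro γ hγ
    refine ⟨union_subset (finsetUnion_subset_iff.2 fun a _ => (hf a).1) ?_,
      cardLT_union hμ.aleph0_le ?_ (mk_image_le.trans_lt ?_)⟩
    · rintro _ ⟨w, hw, rfl⟩
      simp only [mem_iUnion] at hw
      obtain ⟨z, hz, hw⟩ := hw
      exact (hidx γ hγ z hz w hw).1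
    · exact cardLT_finsetUnion hμ (hκ.aleph0_le.trans_lt (Order.lt_succ κ)) (mk_Iio_lt_lift hγ)
        fun a _ => (hf a).2.trans hκμ
    · exact (card_biUnion_lt_iff_forall_of_isRegular hμ.lift ((hT γ hγ).2.trans_lt hκμ)).2
        fun z hz => (hC γ hγ z hz).2.trans hκμ
  obtain ⟨γbar, hγbar, hclosed⟩ := exists_closed_ord hκ hμ (Order.lt_succ κ) hA
  refine ⟨γbar, hγbar, fun a ha => ?_, fun y hy hyν => ?_⟩
  · obtain ⟨γ, -, haγ, hAγ⟩ := hclosed a ha (cardLT_of_finite hκ.aleph0_le a.finite_toSet)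
    exact (subset_finsetUnion haγ).trans (subset_union_left.trans hAγ)
  · have hyκ : cardLT y κ := hyν.trans (lift_lt.2 hνκ)
    obtain ⟨γ, hγγbar, hyγ, hAγ⟩ := hclosed y hy hyκ
    have hγ : γ < μ := hγγbar.trans_lt hγbar
    obtain ⟨z, hz, hyz⟩ := (hT γ hγ).1.2.1 y ⟨hyγ, hyκ⟩
    obtain ⟨w, hw, hyw⟩ := (hC γ hγ z hz).1.2 y hyz hyν
    refine ⟨idx w, hAγ (subset_union_right ⟨w, mem_biUnion hz hw, rfl⟩), ?_⟩
    rw [(hidx γ hγ z hz w hw).2]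
    exact hyw

lemma IsClubP.exists_mem_clubC_covered (hν : ν.IsRegular) (hκ : κ.IsRegular) (hκu : ℵ₀ < κ)
    (hνκ : ν < κ)
    (hcf : ∀ γ : Ordinal.{0}, ν.ord < γ → γ < κ.ord →
      ∃ Y : Set (Set Ordinal.{0}), #Y < lift.{1} κ ∧ CofinalIn ν (Iio γ) Y)
    {Γ : Ordinal.{0}} {T' : Set (Set Ordinal.{0})} (hT' : IsClubP κ (pkl κ Γ) T')
    {f : Finset Ordinal.{0} → Set Ordinal.{0}} (hf : ∀ a, cardLT (f a) κ)
    (hfΓ : ∀ a : Finset Ordinal.{0}, ↑a ⊆ Iio Γ → f a ⊆ Iio Γ) {c : Ordinal.{0} → Set Ordinal.{0}}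
    (hc : CofinalBy ν c (Iio Γ)) :
    ∃ z ∈ T', z ∈ clubC κ Γ f ∧ CofinalBy ν c z := by
  have hξ : ∀ y, ∃ ξ, y ⊆ Iio Γ → cardLT y ν → ξ < Γ ∧ y ⊆ c ξ := fun y => by
    by_cases hy : y ⊆ Iio Γ ∧ cardLT y ν
    · obtain ⟨ξ, hξ⟩ := hc y hy.1 hy.2
      exact ⟨ξ, fun _ _ => hξ⟩
    · exact ⟨0, fun h h' => absurd ⟨h, h'⟩ hy⟩
  choose ξof hξof using hξ
  have hY : ∀ W, ∃ Y : Set (Set Ordinal.{0}), cardLT W κ → #Y < lift.{1} κ ∧ CofinalIn ν W Y :=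
      fun W => by
    by_cases hW : cardLT W κ
    · obtain ⟨Y, hY⟩ := exists_cofinalIn_of_cardLT hκ hνκ hcf hW
      exact ⟨Y, fun _ => hY⟩
    · exact ⟨∅, fun h => absurd h hW⟩
  choose Yof hYof using hY
  set step : Set Ordinal.{0} → Set Ordinal.{0} := fun W => finsetUnion f W ∪ ξof '' Yof W
  have hstep : ∀ W ∈ pkl κ Γ, step W ∈ pkl κ Γ := by
    intro W hW
    have hYW := hYof W hW.2
    refine union_mem_pkl hκ.aleph0_le ⟨finsetUnion_subset_iff.2 fun a ha => hfΓ a (ha.trans hW.1),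
      cardLT_finsetUnion hκ hκu hW.2 fun a _ => hf a⟩ ⟨?_, mk_image_le.trans_lt hYW.1⟩
    rintro _ ⟨y, hy, rfl⟩
    exact (hξof y ((hYW.2.1 y hy).1.trans hW.1) (hYW.2.1 y hy).2).1
  obtain ⟨z, hzT, hz⟩ := hT'.exists_mem_forall_subset_step hν hκ hνκ step hstep
  refine ⟨z, hzT, ⟨hT'.1 hzT, fun a ha => ?_⟩, fun y hy hyν => ?_⟩
  · obtain ⟨w, -, haw, hwz⟩ := hz a ha (cardLT_of_finite hν.aleph0_le a.finite_toSet)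
    exact (subset_finsetUnion haw).trans (subset_union_left.trans hwz)
  · obtain ⟨w, hw, hyw, hwz⟩ := hz y hy hyν
    have hYw := (hYof w hw.2).2
    obtain ⟨y', hy', hyy'⟩ := hYw.2 y hyw hyν
    have hξy' := hξof y' ((hYw.1 y' hy').1.trans hw.1) (hYw.1 y' hy').2
    exact ⟨ξof y', hwz (subset_union_right ⟨y', hy', rfl⟩), hyy'.trans hξy'.2⟩

end Stationarity

theorem T_stationary_general (ν κ : Cardinal.{0})
    (hν : ν.IsRegular)
    (hκ : κ.IsRegular) (hκu : Cardinal.aleph0 < κ) (hνκ : ν < κ)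
    (hcf : ∀ γ : Ordinal.{0}, ν.ord < γ → γ < κ.ord →
      ∃ θ : Ordinal.{0}, θ < κ.ord ∧ ∃ d : Ordinal.{0} → Set Ordinal.{0},
        (∀ ξ < θ, d ξ ⊆ Set.Iio γ ∧ cardLT (d ξ) ν) ∧
        ∀ x : Set Ordinal.{0}, x ⊆ Set.Iio γ → cardLT x ν → ∃ ξ < θ, x ⊆ d ξ)
    (T : Ordinal.{0} → Set (Set Ordinal.{0}))
    (hT : ∀ γ < (Order.succ κ).ord,
      IsClubP κ (pkl κ γ) (T γ) ∧ Cardinal.mk ↥(T γ) ≤ Cardinal.lift.{1, 0} κ)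
    (C : Set Ordinal.{0} → Set (Set Ordinal.{0}))
    (hC : ∀ γ < (Order.succ κ).ord, ∀ z ∈ T γ,
      (∀ y ∈ C z, y ⊆ z ∧ cardLT y ν) ∧
      (∀ y : Set Ordinal.{0}, y ⊆ z → cardLT y ν → ∃ w ∈ C z, y ⊆ w) ∧
      Cardinal.mk ↥(C z) < Cardinal.lift.{1, 0} κ)
    (c : Ordinal.{0} → Set Ordinal.{0})
    (hc : c '' Set.Iio (Order.succ κ).ord =
      ⋃ γ ∈ Set.Iio (Order.succ κ).ord, ⋃ z ∈ T γ, C z) :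
    IsStatP κ (pkl κ (Order.succ κ).ord)
      {z | (∃ γ < (Order.succ κ).ord, z ∈ T γ) ∧
        ∀ y : Set Ordinal.{0}, y ⊆ z → cardLT y ν → ∃ ξ ∈ z, y ⊆ c ξ} := by
  refine ⟨fun z ⟨⟨γ, hγ, hz⟩, _⟩ => pkl_mono hγ.le ((hT γ hγ).1.1 hz), fun D hD => ?_⟩
  have hcfY : ∀ γ : Ordinal.{0}, ν.ord < γ → γ < κ.ord →
      ∃ Y : Set (Set Ordinal.{0}), #Y < lift.{1} κ ∧ CofinalIn ν (Iio γ) Y := fun γ hνγ hγκ => by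
    obtain ⟨θ, hθκ, d, hd, hdcov⟩ := hcf γ hνγ hγκ
    refine ⟨d '' Iio θ, mk_image_le.trans_lt (mk_Iio_lt_lift hθκ),
      by rintro _ ⟨ξ, hξ, rfl⟩; exact hd ξ hξ, fun x hx hxν => ?_⟩
    obtain ⟨ξ, hξ, hxd⟩ := hdcov x hx hxν
    exact ⟨d ξ, mem_image_of_mem d hξ, hxd⟩
  obtain ⟨f, hf, hfD⟩ := hD.exists_clubC_subset hκ
  obtain ⟨γbar, hγbar, hfγbar, hcγbar⟩ := exists_ord_closed_cofinalBy hκ hνκ hT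
    (fun γ hγ z hz => and_assoc.2 (hC γ hγ z hz)) hc.ge hf
  obtain ⟨z, hzT, hzf, hzc⟩ := (hT γbar hγbar).1.exists_mem_clubC_covered hν hκ hκu hνκ hcfY
    (fun a => (hf a).2) hfγbar hcγbar
  exact ⟨z, ⟨⟨γbar, hγbar, hzT⟩, hzc⟩, hfD ⟨pkl_mono hγbar.le hzf.1, hzf.2⟩⟩

/-- Let `ν < κ` be regular uncountable with `cf(ν, γ) < κ` for all `ν < γ < κ`, and let
`μ = κ⁺`.  Given clubs `T γ ⊆ P_κ γ` of size `≤ κ` for `γ < μ`, cofinal sets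
`C z ⊆ P_ν z` of size `< κ` for `z ∈ ⋃ T γ`, and an enumeration `⟨c_ξ : ξ < μ⟩` of
`⋃ C z`, the set `T* = {z ∈ ⋃ T γ : {c_ξ : ξ ∈ z}` is cofinal in `P_ν z}` is stationary
in `P_κ μ`. -/
theorem T_stationary (ν κ : Cardinal.{0})
    (hν : ν.IsRegular) (hνu : Cardinal.aleph0 < ν)
    (hκ : κ.IsRegular) (hκu : Cardinal.aleph0 < κ) (hνκ : ν < κ)
    (hcf : ∀ γ : Ordinal.{0}, ν.ord < γ → γ < κ.ord →
      ∃ θ : Ordinal.{0}, θ < κ.ord ∧ ∃ d : Ordinal.{0} → Set Ordinal.{0},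
        (∀ ξ < θ, d ξ ⊆ Set.Iio γ ∧ cardLT (d ξ) ν) ∧
        ∀ x : Set Ordinal.{0}, x ⊆ Set.Iio γ → cardLT x ν → ∃ ξ < θ, x ⊆ d ξ)
    (T : Ordinal.{0} → Set (Set Ordinal.{0}))
    (hT : ∀ γ < (Order.succ κ).ord,
      IsClubP κ (pkl κ γ) (T γ) ∧ Cardinal.mk ↥(T γ) ≤ Cardinal.lift.{1, 0} κ)
    (C : Set Ordinal.{0} → Set (Set Ordinal.{0}))
    (hC : ∀ γ < (Order.succ κ).ord, ∀ z ∈ T γ,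
      (∀ y ∈ C z, y ⊆ z ∧ cardLT y ν) ∧
      (∀ y : Set Ordinal.{0}, y ⊆ z → cardLT y ν → ∃ w ∈ C z, y ⊆ w) ∧
      Cardinal.mk ↥(C z) < Cardinal.lift.{1, 0} κ)
    (c : Ordinal.{0} → Set Ordinal.{0})
    (hc : c '' Set.Iio (Order.succ κ).ord =
      ⋃ γ ∈ Set.Iio (Order.succ κ).ord, ⋃ z ∈ T γ, C z) :
    IsStatP κ (pkl κ (Order.succ κ).ord)
      {z | (∃ γ < (Order.succ κ).ord, z ∈ T γ) ∧
        ∀ y : Set Ordinal.{0}, y ⊆ z → cardLT y ν → ∃ ξ ∈ z, y ⊆ c ξ} :=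
  T_stationary_general ν κ hν hκ hκu hνκ hcf T hT C hC c hc
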